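/- Let p ∈ Σ be an invisible fold of X, i.e., Xh(p) = 0 and X²h(p) < 0. Then t_X^+(p) = 0 and t_X^+ is continuous at p: for every ε > 0 there is a neighborhood V of p in M such that t_X^+(p̃) < ε for all p̃ ∈ V ∩ Σ⁺. -/

import Mathlib

/- STATEMENT 6: at an invisible fold p of X (h(p) = 0, Xh(p) = 0, X²h(p) < 0) one has
t_X^+(p) = 0 and t_X^+ is continuous at p within Σ⁺: for every ε > 0 the inequality
t_X^+(p̃) < ε holds for all p̃ ∈ Σ⁺ near p. -/

open scoped Manifold ENNReal
open Set

noncomputable section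

variable {E H M : Type*} [NormedAddCommGroup E] [NormedSpace ℝ E]
  [TopologicalSpace H] [TopologicalSpace M] [ChartedSpace H M]

/-- The Lie derivative `Wf(p) = df_p(W(p))` of a function `f` along a vector field `W`. -/
def lieDeriv (I : ModelWithCorners ℝ E H) (W : (p : M) → TangentSpace I p)
    (f : M → ℝ) : M → ℝ :=
  fun p => mfderiv I 𝓘(ℝ, ℝ) f p (W p)

open Classical in
/-- The exit time of the region `S` under the flow `φ`, exiting through the set `Exit`. -/
def exitTimeGen (φ : M → ℝ → M) (S Exit : Set M) (p : M) : ℝ≥0∞ :=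
  if ∀ t : ℝ, 0 ≤ t → φ p t ∈ S then ∞
  else if ∃ ε > (0 : ℝ), ∀ t ∈ Icc (0 : ℝ) ε, φ p t ∈ S then
    sInf {s : ℝ≥0∞ | ∃ t : ℝ, 0 < t ∧ φ p t ∈ Exit ∧ s = ENNReal.ofReal t}
  else 0

/-- The set `S_X^{ic}` of invisible cusps of `X`. -/
def invisibleCusps (I : ModelWithCorners ℝ E H) (X : (p : M) → TangentSpace I p)
    (h : M → ℝ) : Set M :=
  {p | h p = 0 ∧ lieDeriv I X h p = 0 ∧ lieDeriv I X (lieDeriv I X h) p = 0 ∧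
    lieDeriv I X (lieDeriv I X (lieDeriv I X h)) p < 0 ∧
    LinearIndependent ℝ
      ![(mfderiv I 𝓘(ℝ, ℝ) h p : TangentSpace I p →L[ℝ] ℝ),
        (mfderiv I 𝓘(ℝ, ℝ) (lieDeriv I X h) p : TangentSpace I p →L[ℝ] ℝ),
        (mfderiv I 𝓘(ℝ, ℝ) (lieDeriv I X (lieDeriv I X h)) p : TangentSpace I p →L[ℝ] ℝ)]}

/-- The exit time `t_X^+ : Σ⁺ → [0,∞]`, with `Σ⁺ = {h ≥ 0}` and exit set
`S_X^{ic} ∪ Σ_X^-`. -/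
def exitTimePlus (I : ModelWithCorners ℝ E H) (X : (p : M) → TangentSpace I p)
    (φ : M → ℝ → M) (h : M → ℝ) : M → ℝ≥0∞ :=
  exitTimeGen φ {p | 0 ≤ h p}
    (invisibleCusps I X h ∪ {p | h p = 0 ∧ lieDeriv I X h p < 0})

/-! ### Auxiliary lemmas -/

/-- The second projection on the tangent bundle of `ℝ` is smooth. -/
theorem aux_contMDiff_snd_tangent : ContMDiff 𝓘(ℝ,ℝ).tangent 𝓘(ℝ,ℝ) (⊤ : ℕ∞)
    (fun x : TangentBundle 𝓘(ℝ,ℝ) ℝ => x.2) := by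
  exact contMDiff_snd_tangentBundle_modelSpace ℝ 𝓘(ℝ,ℝ)

/-- The Lie derivative of a smooth function along a smooth vector field is smooth. -/
theorem aux_contMDiff_lieDeriv (I : ModelWithCorners ℝ E H) [IsManifold I (⊤ : ℕ∞) M]
    (X : (p : M) → TangentSpace I p)
    (hX : ContMDiff I I.tangent (⊤ : ℕ∞) (fun p => (⟨p, X p⟩ : TangentBundle I M)))
    (f : M → ℝ) (hf : ContMDiff I 𝓘(ℝ, ℝ) (⊤ : ℕ∞) f) :
    ContMDiff I 𝓘(ℝ, ℝ) (⊤ : ℕ∞) (lieDeriv I X f) := by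
  have h1 : ContMDiff I.tangent 𝓘(ℝ,ℝ).tangent (⊤ : ℕ∞) (tangentMap I 𝓘(ℝ,ℝ) f) :=
    hf.contMDiff_tangentMap (m := (⊤ : ℕ∞)) (by simp)
  exact aux_contMDiff_snd_tangent.comp (h1.comp hX)

/-- Chain rule along a flow of `X`: the derivative of `f ∘ φ q` is the Lie derivative. -/
theorem aux_flow_deriv (I : ModelWithCorners ℝ E H) [IsManifold I (⊤ : ℕ∞) M]
    (X : (p : M) → TangentSpace I p) (φ : M → ℝ → M)
    (hφODE : ∀ p t, HasMFDerivAt 𝓘(ℝ, ℝ) I (φ p) t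
      ((ContinuousLinearMap.id ℝ ℝ).smulRight (X (φ p t))))
    (f : M → ℝ) (hf : ContMDiff I 𝓘(ℝ, ℝ) (⊤ : ℕ∞) f) (q : M) (t : ℝ) :
    HasDerivAt (fun s => f (φ q s)) (lieDeriv I X f (φ q t)) t := by
  have hc : HasMFDerivAt 𝓘(ℝ,ℝ) 𝓘(ℝ,ℝ) (f ∘ φ q) t
      ((mfderiv I 𝓘(ℝ,ℝ) f (φ q t)).comp
        ((ContinuousLinearMap.id ℝ ℝ).smulRight (X (φ q t)))) :=
    ((hf.mdifferentiableAt (by simp)).hasMFDerivAt).comp t (hφODE q t)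
  rw [hasMFDerivAt_iff_hasFDerivAt] at hc
  rw [hasDerivAt_iff_hasFDerivAt]
  refine hc.congr_fderiv ?_
  ext
  symm
  show (1:ℝ) • lieDeriv I X f (φ q t) = mfderiv I 𝓘(ℝ, ℝ) f (φ q t) ((1:ℝ) • X (φ q t))
  rw [one_smul, one_smul]
  rfl

lemma aux_psi_antitone {g1 g2 : ℝ → ℝ} {c b : ℝ}
    (hg1 : ∀ t, HasDerivAt g1 (g2 t) t)
    (hg2 : ∀ t ∈ Icc (0:ℝ) b, g2 t ≤ -c) :
    AntitoneOn (fun t => g1 t + c * t) (Icc 0 b) := by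
  have hψ : ∀ t, HasDerivAt (fun t => g1 t + c * t) (g2 t + c) t := by
    intro t
    exact (hg1 t).add (((hasDerivAt_id' t).const_mul c).congr_deriv (mul_one c))
  refine antitoneOn_of_deriv_nonpos (convex_Icc 0 b)
    (Continuous.continuousOn (continuous_iff_continuousAt.2
      fun t => (hψ t).continuousAt))
    (fun t _ => (hψ t).differentiableAt.differentiableWithinAt) ?_
  intro t ht
  rw [interior_Icc] at ht
  rw [(hψ t).deriv]
  have := hg2 t ⟨le_of_lt ht.1, le_of_lt ht.2⟩
  linarith

lemma aux_taylor_bound {g g1 g2 : ℝ → ℝ} {c b : ℝ}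
    (hg : ∀ t, HasDerivAt g (g1 t) t) (hg1 : ∀ t, HasDerivAt g1 (g2 t) t)
    (hg2 : ∀ t ∈ Icc (0:ℝ) b, g2 t ≤ -c) :
    ∀ t ∈ Icc (0:ℝ) b, g t ≤ g 0 + g1 0 * t - c * t ^ 2 / 2 := by
  have hψ := aux_psi_antitone hg1 hg2
  have hχ : ∀ t, HasDerivAt (fun t => g t + c * t ^ 2 / 2 - g1 0 * t)
      (g1 t + c * t - g1 0) t := by
    intro t
    have h1 : HasDerivAt (fun t : ℝ => c * t ^ 2 / 2) (c * t) t := by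
      have := ((hasDerivAt_pow 2 t).const_mul c).div_const 2
      refine this.congr_deriv ?_
      ring
    have := ((hg t).add h1).sub ((hasDerivAt_id t).const_mul (g1 0))
    refine this.congr_deriv ?_
    ring
  have hmono : AntitoneOn (fun t => g t + c * t ^ 2 / 2 - g1 0 * t) (Icc 0 b) := by
    refine antitoneOn_of_deriv_nonpos (convex_Icc 0 b)
      (Continuous.continuousOn (continuous_iff_continuousAt.2
        fun t => (hχ t).continuousAt))
      (fun t _ => (hχ t).differentiableAt.differentiableWithinAt) ?_
    intro t ht
    rw [interior_Icc] at ht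
    rw [(hχ t).deriv]
    have := hψ (show (0:ℝ) ∈ Icc (0:ℝ) b from ⟨le_refl _, le_of_lt (lt_trans ht.1 ht.2)⟩)
      ⟨le_of_lt ht.1, le_of_lt ht.2⟩ (le_of_lt ht.1)
    simp only [mul_zero, add_zero] at this
    linarith
  intro t ht
  have h0 : (0:ℝ) ∈ Icc (0:ℝ) b := ⟨le_refl _, le_trans ht.1 ht.2⟩
  have := hmono h0 ht ht.1
  simp only at this
  nlinarith [this]

lemma aux_exitTimeGen_eq_zero {φ : M → ℝ → M} {S Exit : Set M} {p : M}
    (h2 : ¬ ∃ ε > (0:ℝ), ∀ t ∈ Icc (0:ℝ) ε, φ p t ∈ S) :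
    exitTimeGen φ S Exit p = 0 := by
  have h1 : ¬ ∀ t : ℝ, 0 ≤ t → φ p t ∈ S :=
    fun h => h2 ⟨1, one_pos, fun t ht => h t ht.1⟩
  simp only [exitTimeGen, if_neg h1, if_neg h2]

lemma aux_exitTimeGen_le {φ : M → ℝ → M} {S Exit : Set M} {p : M}
    (h1 : ¬ ∀ t : ℝ, 0 ≤ t → φ p t ∈ S) {t : ℝ} (ht : 0 < t) (hE : φ p t ∈ Exit) :
    exitTimeGen φ S Exit p ≤ ENNReal.ofReal t := by
  classical
  rw [exitTimeGen, if_neg h1]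
  split_ifs with h2
  · exact sInf_le ⟨t, ht, hE, rfl⟩
  · exact zero_le

theorem exitTimePlus_eq_zero_and_continuous_at_invisible_fold
    (I : ModelWithCorners ℝ E H) [I.Boundaryless] [IsManifold I (⊤ : ℕ∞) M]
    [CompactSpace M] [T2Space M] [FiniteDimensional ℝ E]
    (hdim : Module.finrank ℝ E = 3)
    (h : M → ℝ) (hsmooth : ContMDiff I 𝓘(ℝ, ℝ) (⊤ : ℕ∞) h)
    (hreg : ∀ p : M, h p = 0 → mfderiv I 𝓘(ℝ, ℝ) h p ≠ 0)
    (X : (p : M) → TangentSpace I p)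
    (hXsmooth : ContMDiff I I.tangent (⊤ : ℕ∞) (fun p => (⟨p, X p⟩ : TangentBundle I M)))
    (φX : M → ℝ → M)
    (hφcont : Continuous fun q : M × ℝ => φX q.1 q.2)
    (hφ0 : ∀ p, φX p 0 = p)
    (hφadd : ∀ p s t, φX (φX p s) t = φX p (s + t))
    (hφODE : ∀ p t, HasMFDerivAt 𝓘(ℝ, ℝ) I (φX p) t
      ((ContinuousLinearMap.id ℝ ℝ).smulRight (X (φX p t))))
    (p : M) (hp : h p = 0)
    -- p is an invisible fold of X:
    (hfold1 : lieDeriv I X h p = 0) (hfold2 : lieDeriv I X (lieDeriv I X h) p < 0) :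
    exitTimePlus I X φX h p = 0 ∧
    ∀ ε : ℝ≥0∞, 0 < ε →
      ∀ᶠ q in nhdsWithin p {x : M | 0 ≤ h x}, exitTimePlus I X φX h q < ε := by
  classical
  set Xh := lieDeriv I X h with hXh_def
  set XXh := lieDeriv I X Xh with hXXh_def
  have hXh_s : ContMDiff I 𝓘(ℝ,ℝ) (⊤ : ℕ∞) Xh := aux_contMDiff_lieDeriv I X hXsmooth h hsmooth
  have hXXh_s : ContMDiff I 𝓘(ℝ,ℝ) (⊤ : ℕ∞) XXh := aux_contMDiff_lieDeriv I X hXsmooth Xh hXh_s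
  have hderiv1 : ∀ q t, HasDerivAt (fun s => h (φX q s)) (Xh (φX q t)) t :=
    fun q t => aux_flow_deriv I X φX hφODE h hsmooth q t
  have hderiv2 : ∀ q t, HasDerivAt (fun s => Xh (φX q s)) (XXh (φX q t)) t :=
    fun q t => aux_flow_deriv I X φX hφODE Xh hXh_s q t
  set c : ℝ := -(XXh p) / 2 with hc_def
  have hc : 0 < c := by rw [hc_def]; linarith
  have hFcont : Continuous (fun z : M × ℝ => XXh (φX z.1 z.2)) := hXXh_s.continuous.comp hφcont
  have hopen : IsOpen {z : M × ℝ | XXh (φX z.1 z.2) < -c} :=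
    isOpen_lt hFcont continuous_const
  have hmem : (p, (0:ℝ)) ∈ {z : M × ℝ | XXh (φX z.1 z.2) < -c} := by
    simp only [mem_setOf_eq, hφ0]
    rw [hc_def]; linarith
  have hnh := hopen.mem_nhds hmem
  rw [mem_nhds_prod_iff] at hnh
  obtain ⟨U, hU, V, hV, hUV⟩ := hnh
  obtain ⟨τ, hτ, hτV⟩ : ∃ τ > (0:ℝ), Icc (-τ) τ ⊆ V := by
    obtain ⟨r, hr, hball⟩ := Metric.mem_nhds_iff.1 hV
    refine ⟨r/2, by linarith, fun t ht => hball ?_⟩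
    simp only [Metric.mem_ball, Real.dist_eq, sub_zero]
    rw [abs_lt]
    constructor <;> [linarith [ht.1]; linarith [ht.2]]
  have hpU : p ∈ U := mem_of_mem_nhds hU
  have hbound : ∀ q ∈ U, ∀ t ∈ Icc (0:ℝ) τ, XXh (φX q t) ≤ -c := by
    intro q hq t ht
    exact le_of_lt (hUV (Set.mk_mem_prod hq (hτV ⟨by linarith [ht.1], ht.2⟩)))
  have key : ∀ q ∈ U, ∀ b : ℝ, 0 < b → b ≤ τ →
      h (φX q b) ≤ h q + Xh q * b - c * b ^ 2 / 2 := by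
    intro q hq b hb hbτ
    have := aux_taylor_bound (g := fun s => h (φX q s)) (g1 := fun s => Xh (φX q s))
      (g2 := fun s => XXh (φX q s)) (hderiv1 q) (hderiv2 q)
      (fun t ht => hbound q hq t ⟨ht.1, le_trans ht.2 hbτ⟩) b ⟨le_of_lt hb, le_refl _⟩
    simpa [hφ0] using this
  have hb2p : ∀ ε₀ : ℝ, 0 < ε₀ → ∃ t ∈ Icc (0:ℝ) ε₀, h (φX p t) < 0 := by
    intro ε₀ hε₀
    have hmin : 0 < min ε₀ τ := lt_min hε₀ hτ
    refine ⟨min ε₀ τ, ⟨le_of_lt hmin, min_le_left _ _⟩, ?_⟩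
    have hk := key p hpU (min ε₀ τ) hmin (min_le_right _ _)
    rw [hp, hfold1] at hk
    nlinarith [mul_pos hc (pow_pos hmin 2)]
  have part1 : exitTimePlus I X φX h p = 0 := by
    apply aux_exitTimeGen_eq_zero
    rintro ⟨ε₀, hε₀, hall⟩
    obtain ⟨t, ht, hneg⟩ := hb2p ε₀ hε₀
    have := hall t ht
    simp only [mem_setOf_eq] at this
    linarith
  refine ⟨part1, ?_⟩
  intro ε hε
  obtain ⟨δ₀, hδ₀pos, hδ₀lt⟩ := exists_between hε
  have hδ₀ne : δ₀ ≠ ⊤ := hδ₀lt.ne_top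
  set r := δ₀.toReal with hr_def
  have hr : 0 < r := ENNReal.toReal_pos hδ₀pos.ne' hδ₀ne
  have hofr : ENNReal.ofReal r < ε := by
    rw [hr_def, ENNReal.ofReal_toReal hδ₀ne]; exact hδ₀lt
  set b := min τ r with hb_def
  have hb : 0 < b := lt_min hτ hr
  have hWh : {q : M | h q < c * b ^ 2 / 8} ∈ nhds p :=
    (isOpen_lt hsmooth.continuous continuous_const).mem_nhds
      (by simp only [mem_setOf_eq, hp]; positivity)
  have hWXh : {q : M | Xh q < c * b / 4} ∈ nhds p :=
    (isOpen_lt hXh_s.continuous continuous_const).mem_nhds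
      (by simp only [mem_setOf_eq, hfold1]; positivity)
  filter_upwards [nhdsWithin_le_nhds (Filter.inter_mem (Filter.inter_mem hU hWh) hWXh),
    self_mem_nhdsWithin] with q hq hqS
  obtain ⟨⟨hqU, hqh⟩, hqXh⟩ := hq
  simp only [mem_setOf_eq] at hqh hqXh hqS
  have hgb : h (φX q b) < 0 := by
    have hk := key q hqU b hb (min_le_left _ _)
    nlinarith [hk, hb]
  have h1 : ¬ ∀ t : ℝ, 0 ≤ t → φX q t ∈ {x : M | 0 ≤ h x} := by
    intro hall
    have := hall b (le_of_lt hb)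
    simp only [mem_setOf_eq] at this
    linarith
  by_cases h2 : ∃ ε₀ > (0:ℝ), ∀ t ∈ Icc (0:ℝ) ε₀, φX q t ∈ {x : M | 0 ≤ h x}
  · -- branch 2 true: first crossing is a transversal exit
    obtain ⟨ε₀, hε₀, hS⟩ := h2
    set A := {t : ℝ | t ∈ Icc (0:ℝ) b ∧ h (φX q t) < 0} with hA_def
    have hAmem : b ∈ A := ⟨⟨le_of_lt hb, le_refl _⟩, hgb⟩
    have hAne : A.Nonempty := ⟨b, hAmem⟩
    have hAbdd : BddBelow A := ⟨0, fun t ht => ht.1.1⟩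
    set t' := sInf A with ht'_def
    have ht'mem : t' ∈ Icc (0:ℝ) b :=
      ⟨le_csInf hAne (fun t ht => ht.1.1), csInf_le hAbdd hAmem⟩
    have ht'pos : 0 < t' := by
      refine lt_of_lt_of_le hε₀ (le_csInf hAne ?_)
      intro t ht
      by_contra hlt
      push_neg at hlt
      have := hS t ⟨ht.1.1, le_of_lt hlt⟩
      simp only [mem_setOf_eq] at this
      linarith [ht.2]
    have hcont_g : Continuous (fun s => h (φX q s)) :=
      continuous_iff_continuousAt.2 (fun t => (hderiv1 q t).continuousAt)
    have ht'le : h (φX q t') ≤ 0 := by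
      have hcl : t' ∈ closure A := csInf_mem_closure hAne hAbdd
      have hsub : closure A ⊆ {t : ℝ | h (φX q t) ≤ 0} :=
        closure_minimal (fun t ht => le_of_lt ht.2)
          (isClosed_le hcont_g continuous_const)
      exact hsub hcl
    have hge_on : ∀ t : ℝ, 0 ≤ t → t < t' → 0 ≤ h (φX q t) := by
      intro t h0t htt'
      by_contra hneg
      push_neg at hneg
      have htA : t ∈ A := ⟨⟨h0t, le_trans (le_of_lt htt') ht'mem.2⟩, hneg⟩
      exact absurd (csInf_le hAbdd htA) (not_le.2 htt')
    have ht'ge : 0 ≤ h (φX q t') := by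
      haveI : (nhdsWithin t' (Iio t')).NeBot := nhdsLT_neBot (α := ℝ) t'
      refine ge_of_tendsto
        ((hcont_g.continuousAt (x := t')).tendsto.mono_left
          (nhdsWithin_le_nhds (s := Iio t'))) ?_
      filter_upwards [Ioo_mem_nhdsLT_of_mem
        (show t' ∈ Ioc (0:ℝ) t' from ⟨ht'pos, le_refl _⟩)] with t ht
      exact hge_on t (le_of_lt ht.1) ht.2
    have ht'eq : h (φX q t') = 0 := le_antisymm ht'le ht'ge
    have hg1t' : Xh (φX q t') < 0 := by
      by_contra hge
      push_neg at hge
      have hψ := aux_psi_antitone (c := c) (b := b) (hderiv2 q)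
        (fun t ht => hbound q hqU t ⟨ht.1, le_trans ht.2 (min_le_left _ _)⟩)
      have hpos : ∀ t ∈ Ioo (0:ℝ) t', 0 < Xh (φX q t) := by
        intro t ht
        have hψ' := hψ ⟨le_of_lt ht.1, le_trans (le_of_lt ht.2) ht'mem.2⟩
          ht'mem (le_of_lt ht.2)
        simp only at hψ'
        nlinarith [ht.2, hge, hc]
      have hmono : StrictMonoOn (fun s => h (φX q s)) (Icc 0 t') := by
        refine strictMonoOn_of_deriv_pos (convex_Icc 0 t') hcont_g.continuousOn ?_
        intro t ht
        rw [interior_Icc] at ht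
        rw [(hderiv1 q t).deriv]
        exact hpos t ht
      have hlt := hmono (Set.left_mem_Icc.2 (le_of_lt ht'pos))
        (Set.right_mem_Icc.2 (le_of_lt ht'pos)) ht'pos
      simp only [hφ0, ht'eq] at hlt
      linarith
    have hExit : φX q t' ∈ invisibleCusps I X h ∪ {x : M | h x = 0 ∧ lieDeriv I X h x < 0} :=
      Or.inr ⟨ht'eq, hg1t'⟩
    have hle : exitTimePlus I X φX h q ≤ ENNReal.ofReal t' :=
      aux_exitTimeGen_le h1 ht'pos hExit
    refine lt_of_le_of_lt (le_trans hle (ENNReal.ofReal_le_ofReal ?_)) hofr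
    exact le_trans ht'mem.2 (min_le_right _ _)
  · -- branch 2 false: exit time is 0
    have : exitTimePlus I X φX h q = 0 := aux_exitTimeGen_eq_zero h2
    rw [this]
    exact hε
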